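/- Let M be a matroid on a finite ground set E, let C be a cocircuit of M, let v ∈ C, and let ℓ ≥ 2. Then SF_ℓ(J(M)) : x_C = SF_{ℓ−1}(J(M ⧸ {v}) : x_C) = SF_{ℓ−1}(J((M ⧸ {v}) ⧹ (C \ {v}))). -/

import Mathlib

open Matroid MvPolynomial

/-- The squarefree monomial `x_S = ∏_{i ∈ S} x_i`. -/
noncomputable def xS {α : Type*} [Fintype α] (K : Type*) [Field K] (S : Set α) :
    MvPolynomial α K :=
  ∏ i ∈ S.toFinite.toFinset, MvPolynomial.X i

/-- The monomial `x^γ = ∏ i, x_i ^ γ(i)`. -/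
noncomputable def xPow {α : Type*} [Fintype α] (K : Type*) [Field K] (γ : α → ℕ) :
    MvPolynomial α K :=
  ∏ i : α, (MvPolynomial.X i : MvPolynomial α K) ^ γ i

/-- `p_S`: the ideal of `K[x_i : i ∈ α]` generated by the variables `x_i`, `i ∈ S`. -/
noncomputable def pS {α : Type*} (K : Type*) [Field K] (S : Set α) :
    Ideal (MvPolynomial α K) :=
  Ideal.span (MvPolynomial.X '' S)

/-- The cover ideal `J(M) = ⋂_{F basis of M} p_F` of a matroid `M`. -/
noncomputable def coverIdeal {α : Type*} [Fintype α] (K : Type*) [Field K] (M : Matroid α) :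
    Ideal (MvPolynomial α K) :=
  ⨅ F ∈ {F : Set α | M.IsBase F}, pS K F

/-- The `ℓ`-th symbolic power `J(M)^{(ℓ)} = ⋂_{F basis of M} p_F^ℓ` of the cover ideal. -/
noncomputable def symbPow {α : Type*} [Fintype α] (K : Type*) [Field K] (M : Matroid α)
    (ℓ : ℕ) : Ideal (MvPolynomial α K) :=
  ⨅ F ∈ {F : Set α | M.IsBase F}, (pS K F) ^ ℓ

/-- `SF_ℓ(J(M))`: the ideal generated by the squarefree monomials of `J(M)^{(ℓ)}`, i.e. by the
monomials `x_S` with `|S ∩ F| ≥ ℓ` for every basis `F` of `M`. -/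
noncomputable def SF {α : Type*} [Fintype α] (K : Type*) [Field K] (M : Matroid α)
    (ℓ : ℕ) : Ideal (MvPolynomial α K) :=
  Ideal.span {m : MvPolynomial α K |
    ∃ S : Set α, m = xS K S ∧ ∀ F : Set α, M.IsBase F → ℓ ≤ (S ∩ F).ncard}

/-- Matroid deletion: `M ⧹ D` is the restriction of `M` to `M.E \ D`. -/
def mdel {α : Type*} (M : Matroid α) (D : Set α) : Matroid α := M ↾ (M.E \ D)

/-- Matroid contraction: `M ⧸ C = (M✶ ⧹ C)✶`. -/
def mcon {α : Type*} (M : Matroid α) (C : Set α) : Matroid α := (mdel M✶ C)✶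

/-- A cocircuit of `M`: a minimal subset of the ground set meeting every basis of `M`. -/
def IsCocircuit {α : Type*} (M : Matroid α) (C : Set α) : Prop :=
  C ⊆ M.E ∧ (∀ F, M.IsBase F → (C ∩ F).Nonempty) ∧
    ∀ C' : Set α, C' ⊂ C → ∃ F, M.IsBase F ∧ C' ∩ F = ∅

/-! Every ideal involved is spanned by monomials and membership of a monomial `x^d` depends only
on its support `X`, while multiplying by `x_C` replaces `X` by `C ∪ X`; so both equalities are
statements about sets. The bases of `(M ⧸ {v}) ⧹ (C \ {v})` are the sets `G \ {v}` for the bases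
`G` of `M` with `G ∩ C = {v}`, and every independent set disjoint from `C` lies in one of them.
Given a base `F` of `M`, completing `F \ C` to such a base `G \ {v}` trades the `|F ∩ C| ≥ 1`
elements of `C` for `|F ∩ C| - 1` new ones, which accounts for the shift from `ℓ` to `ℓ - 1`. -/

namespace MvPolynomial

variable {σ R : Type*} [CommSemiring R]

lemma support_monomial_one_mul (c : σ →₀ ℕ) (p : MvPolynomial σ R) :
    (monomial c 1 * p).support = p.support.map (addLeftEmbedding c) :=
  AddMonoidAlgebra.support_coeff_single_mul p 1 (by simp) c

end MvPolynomial

lemma Finsupp.coe_support_indicator_one_add {ι : Type*} (s : Finset ι) (d : ι →₀ ℕ) :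
    ((Finsupp.indicator s fun _ _ ↦ 1) + d).support = (s ∪ d.support : Set ι) := by
  classical
  ext i
  by_cases hi : i ∈ s <;> simp [Finsupp.indicator_apply, hi]

lemma Finsupp.indicator_one_le_iff {ι : Type*} (s : Finset ι) (d : ι →₀ ℕ) :
    (Finsupp.indicator s fun _ _ ↦ 1) ≤ d ↔ (s : Set ι) ⊆ d.support := by
  classical
  refine ⟨fun h i hi ↦ ?_, fun h i ↦ ?_⟩
  · have := h i
    simp only [Finsupp.indicator_apply, Finset.mem_coe.1 hi, dite_true] at this
    simpa [Nat.one_le_iff_ne_zero] using this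
  · rw [Finsupp.indicator_apply]
    split_ifs with hi
    · simpa [Nat.one_le_iff_ne_zero] using h hi
    · exact Nat.zero_le _

section MonomialIdeals

variable {α : Type*} [Fintype α] {K : Type*} [Field K]

lemma xS_eq_monomial (S : Set α) :
    xS K S = monomial (Finsupp.indicator S.toFinite.toFinset fun _ _ ↦ 1) 1 := by
  simpa [xS] using prod_X_pow (R := K) (fun _ ↦ 1) S.toFinite.toFinset

lemma mem_span_xS_iff_of_monotone {Q : Set α → Prop} (hQ : Monotone Q) {p : MvPolynomial α K} :
    p ∈ Ideal.span {m | ∃ S, m = xS K S ∧ Q S} ↔ ∀ d ∈ p.support, Q d.support := by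
  have hgen : {m | ∃ S, m = xS K S ∧ Q S} = (fun e ↦ monomial e (1 : K)) ''
      {e | ∃ S : Set α, e = Finsupp.indicator S.toFinite.toFinset (fun _ _ ↦ 1) ∧ Q S} := by
    ext m
    simp only [Set.mem_ofPred_eq, Set.mem_image]
    constructor
    · rintro ⟨S, rfl, hS⟩
      exact ⟨_, ⟨S, rfl, hS⟩, (xS_eq_monomial S).symm⟩
    · rintro ⟨_, ⟨S, rfl, hS⟩, rfl⟩
      exact ⟨S, (xS_eq_monomial S).symm, hS⟩
  rw [hgen, mem_ideal_span_monomial_image]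
  refine forall₂_congr fun d _ ↦ ⟨?_, fun hd ↦ ⟨_, ⟨d.support, rfl, hd⟩, ?_⟩⟩
  · rintro ⟨_, ⟨S, rfl, hS⟩, hle⟩
    rw [Finsupp.indicator_one_le_iff, Set.Finite.coe_toFinset] at hle
    exact hQ hle hS
  · rw [Finsupp.indicator_one_le_iff, Set.Finite.coe_toFinset]

lemma mem_SF_iff {M : Matroid α} {ℓ : ℕ} {p : MvPolynomial α K} :
    p ∈ SF K M ℓ ↔ ∀ d ∈ p.support, ∀ F, M.IsBase F → ℓ ≤ ((d.support : Set α) ∩ F).ncard :=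
  mem_span_xS_iff_of_monotone fun _ _ hST hS F hF ↦
    (hS F hF).trans (Set.ncard_le_ncard (Set.inter_subset_inter_left F hST))

lemma mem_coverIdeal_iff {M : Matroid α} {p : MvPolynomial α K} :
    p ∈ coverIdeal K M ↔
      ∀ d ∈ p.support, ∀ F, M.IsBase F → ((d.support : Set α) ∩ F).Nonempty := by
  simp only [coverIdeal, pS, Ideal.mem_iInf, Set.mem_ofPred_eq, mem_ideal_span_X_image]
  refine ⟨fun h d hd F hF ↦ ?_, fun h F hF d hd ↦ ?_⟩
  · obtain ⟨i, hiF, hi⟩ := h F hF d hd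
    exact ⟨i, Finsupp.mem_support_iff.2 hi, hiF⟩
  · obtain ⟨i, hi, hiF⟩ := h d hd F hF
    exact ⟨i, hiF, Finsupp.mem_support_iff.1 hi⟩

lemma colon_span_xS_eq {I I' : Ideal (MvPolynomial α K)} {Q Q' : Set α → Prop}
    (hI : ∀ p, p ∈ I ↔ ∀ d ∈ p.support, Q d.support)
    (hI' : ∀ p, p ∈ I' ↔ ∀ d ∈ p.support, Q' d.support)
    {C : Set α} (hQ : ∀ X, Q (C ∪ X) ↔ Q' X) :
    I.colon (Ideal.span {xS K C}) = I' := by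
  ext p
  rw [Ideal.mem_colon_span_singleton, mul_comm, xS_eq_monomial, hI, hI',
    support_monomial_one_mul, Finset.forall_mem_map]
  refine forall₂_congr fun d _ ↦ ?_
  rw [addLeftEmbedding_apply, Finsupp.coe_support_indicator_one_add, Set.Finite.coe_toFinset, hQ]

end MonomialIdeals

lemma IsCocircuit.isCocircuit {α : Type*} {M : Matroid α} {C : Set α}
    (hC : _root_.IsCocircuit M C) : M.IsCocircuit C := by
  rw [isCocircuit_iff_minimal, Set.minimal_iff_forall_ssubset]
  refine ⟨hC.2.1, fun C' hC' hmeet ↦ ?_⟩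
  obtain ⟨F, hF, hC'F⟩ := hC.2.2 C' hC'
  exact (hmeet F hF).ne_empty hC'F

namespace Matroid

variable {α : Type*} {M : Matroid α} {B C D F I X : Set α} {v : α}

lemma forall_isBase_union_inter_nonempty_iff (hD : M.Coindep (D ∩ M.E)) :
    (∀ B, M.IsBase B → ((D ∪ X) ∩ B).Nonempty) ↔ ∀ B, (M ＼ D).IsBase B → (X ∩ B).Nonempty := by
  have hbase : ∀ B, (M ＼ D).IsBase B ↔ M.IsBase B ∧ Disjoint B D := fun B ↦ by
    rw [← delete_inter_ground_eq, hD.delete_isBase_iff]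
    refine and_congr_right fun hB ↦ ⟨fun h ↦ Set.disjoint_left.2 fun x hxB hxD ↦
      h.notMem_of_mem_left hxB ⟨hxD, hB.subset_ground hxB⟩,
      fun h ↦ h.mono_right Set.inter_subset_left⟩
  refine ⟨fun h B hB ↦ ?_, fun h B hB ↦ ?_⟩
  · obtain ⟨hB, hBD⟩ := (hbase B).1 hB
    obtain ⟨x, hxDX, hxB⟩ := h B hB
    exact ⟨x, hxDX.resolve_left (hBD.notMem_of_mem_left hxB), hxB⟩
  · by_cases hBD : Disjoint B D
    · exact (h B ((hbase B).2 ⟨hB, hBD⟩)).mono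
        (Set.inter_subset_inter_left B Set.subset_union_right)
    · obtain ⟨x, hxB, hxD⟩ := Set.not_disjoint_iff.1 hBD
      exact ⟨x, Or.inl hxD, hxB⟩

/-- A circuit through `v` inside `insert v I` would meet the cocircuit `C` in `{v}` alone. -/
lemma IsCocircuit.indep_insert_of_disjoint (hC : M.IsCocircuit C) (hv : v ∈ C) (hI : M.Indep I)
    (hIC : Disjoint I C) : M.Indep (insert v I) := by
  by_contra hdep
  rw [not_indep_iff (Set.insert_subset (hC.subset_ground hv) hI.subset_ground)] at hdep
  obtain ⟨C', hC'sub, hC'⟩ := hdep.exists_isCircuit_subset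
  have hvC' : v ∈ C' := by
    by_contra hvC'
    exact hC'.dep.not_indep (hI.subset ((Set.subset_insert_iff_of_notMem hvC').1 hC'sub))
  refine hC'.inter_isCocircuit_ne_singleton hC (Set.eq_singleton_iff_unique_mem.2 ⟨⟨hvC', hv⟩, ?_⟩)
  rintro x ⟨hxC', hxC⟩
  exact (hC'sub hxC').resolve_right (hIC.notMem_of_mem_right hxC)

lemma IsCocircuit.coindep_contract_sdiff (hC : M.IsCocircuit C) (hv : v ∈ C) :
    (M ／ {v}).Coindep (C \ {v}) :=
  coindep_contract_iff.2 ⟨hC.isCircuit.sdiff_singleton_indep hv, Set.disjoint_sdiff_left⟩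

lemma IsCocircuit.isBase_contract_delete_iff (hC : M.IsCocircuit C) (hv : v ∈ C) :
    (M ／ {v} ＼ (C \ {v})).IsBase B ↔ M.IsBase (insert v B) ∧ Disjoint B C := by
  rw [(hC.coindep_contract_sdiff hv).delete_isBase_iff,
    (hC.isNonloop_of_mem hv).indep.contract_isBase_iff,
    Set.union_singleton, and_assoc, ← Set.disjoint_union_right, Set.union_sdiff_self,
    Set.singleton_union, Set.insert_eq_of_mem hv]

lemma IsCocircuit.exists_isBase_contract_delete_superset (hC : M.IsCocircuit C) (hv : v ∈ C)
    (hI : M.Indep I) (hIC : Disjoint I C) :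
    ∃ B, (M ／ {v} ＼ (C \ {v})).IsBase B ∧ I ⊆ B := by
  refine Indep.exists_isBase_superset ?_
  rw [delete_indep_iff, (hC.isNonloop_of_mem hv).contractElem_indep_iff]
  exact ⟨⟨hIC.notMem_of_mem_right hv, hC.indep_insert_of_disjoint hv hI hIC⟩,
    hIC.mono_right Set.sdiff_subset⟩

lemma IsCocircuit.le_ncard_inter_of_forall_isBase_contract_delete [M.RankFinite]
    (hC : M.IsCocircuit C) (hv : v ∈ C) {ℓ : ℕ}
    (h : ∀ B, (M ／ {v} ＼ (C \ {v})).IsBase B → ℓ - 1 ≤ (X ∩ B).ncard) (hF : M.IsBase F) :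
    ℓ ≤ ((C ∪ X) ∩ F).ncard := by
  set I := F \ C
  obtain ⟨B, hB, hIB⟩ := hC.exists_isBase_contract_delete_superset hv
    (hF.indep.subset Set.sdiff_subset) Set.disjoint_sdiff_left
  obtain ⟨hvB, hBC⟩ := (hC.isBase_contract_delete_iff hv).1 hB
  have hBfin : B.Finite := hvB.finite.subset (Set.subset_insert v B)
  have hFC : 0 < (F ∩ C).ncard := by
    rw [Set.ncard_pos (hF.finite.subset Set.inter_subset_left), Set.inter_comm]
    exact (isCocircuit_iff_minimal.1 hC).prop F hF
  have hcardB : B.ncard + 1 = F.ncard := by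
    rw [← Set.ncard_insert_of_notMem (hBC.notMem_of_mem_right hv) hBfin,
      hvB.ncard_eq_ncard_of_isBase hF]
  have hcardF : (F ∩ C).ncard + I.ncard = F.ncard :=
    Set.ncard_inter_add_ncard_sdiff_eq_ncard F C hF.finite
  have hsdiff : (B \ I).ncard = B.ncard - I.ncard := Set.ncard_sdiff hIB (hBfin.subset hIB)
  have hsplitB : (X ∩ B).ncard ≤ (X ∩ I).ncard + (B \ I).ncard := by
    refine (Set.ncard_le_ncard ?_ ((hF.finite.sdiff.inter_of_right X).union hBfin.sdiff)).trans
      (Set.ncard_union_le _ _)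
    · rintro x ⟨hxX, hxB⟩
      by_cases hxI : x ∈ I
      · exact Or.inl ⟨hxX, hxI⟩
      · exact Or.inr ⟨hxB, hxI⟩
  have hsplitF : (F ∩ C).ncard + (X ∩ I).ncard ≤ ((C ∪ X) ∩ F).ncard := by
    rw [← Set.ncard_union_eq (Set.disjoint_left.2 fun x hx hx' ↦ hx'.2.2 hx.2)
      (hF.finite.subset Set.inter_subset_left) (hF.finite.sdiff.inter_of_right X)]
    refine Set.ncard_le_ncard ?_ (hF.finite.subset Set.inter_subset_right)
    rintro x (⟨hxF, hxC⟩ | ⟨hxX, hxF, -⟩)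
    · exact ⟨Or.inl hxC, hxF⟩
    · exact ⟨Or.inr hxX, hxF⟩
  have := h B hB
  omega

lemma IsCocircuit.forall_le_ncard_inter_isBase_iff [M.RankFinite] (hC : M.IsCocircuit C)
    (hv : v ∈ C) {ℓ : ℕ} :
    (∀ F, M.IsBase F → ℓ ≤ ((C ∪ X) ∩ F).ncard) ↔
      ∀ B, (M ／ {v} ＼ (C \ {v})).IsBase B → ℓ - 1 ≤ (X ∩ B).ncard := by
  refine ⟨fun h B hB ↦ ?_, fun h F hF ↦ hC.le_ncard_inter_of_forall_isBase_contract_delete hv h hF⟩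
  obtain ⟨hvB, hBC⟩ := (hC.isBase_contract_delete_iff hv).1 hB
  have hsub : (C ∪ X) ∩ insert v B ⊆ insert v (X ∩ B) := by
    rintro x ⟨hxCX, rfl | hxB⟩
    · exact Set.mem_insert x _
    · exact Set.mem_insert_of_mem v ⟨hxCX.resolve_left (hBC.notMem_of_mem_left hxB), hxB⟩
  have := (h _ hvB).trans ((Set.ncard_le_ncard hsub
    (hvB.finite.subset (Set.insert_subset_insert Set.inter_subset_right))).trans
    (Set.ncard_insert_le v (X ∩ B)))
  omega

end Matroid

section ColonIdeals

variable {α : Type*} [Fintype α] {K : Type*} [Field K]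

lemma coverIdeal_colon_xS_of_coindep {N : Matroid α} {D : Set α} (hD : N.Coindep (D ∩ N.E)) :
    (coverIdeal K N).colon (Ideal.span {xS K D}) = coverIdeal K (N ＼ D) :=
  colon_span_xS_eq (Q := fun S ↦ ∀ B, N.IsBase B → (S ∩ B).Nonempty)
    (Q' := fun S ↦ ∀ B, (N ＼ D).IsBase B → (S ∩ B).Nonempty)
    (fun _ ↦ mem_coverIdeal_iff) (fun _ ↦ mem_coverIdeal_iff)
    fun _ ↦ forall_isBase_union_inter_nonempty_iff hD

lemma SF_colon_xS_of_isCocircuit {M : Matroid α} {C : Set α} {v : α} (hC : M.IsCocircuit C)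
    (hv : v ∈ C) (ℓ : ℕ) :
    (SF K M ℓ).colon (Ideal.span {xS K C}) = SF K (M ／ {v} ＼ (C \ {v})) (ℓ - 1) :=
  colon_span_xS_eq (Q := fun S ↦ ∀ F, M.IsBase F → ℓ ≤ (S ∩ F).ncard)
    (Q' := fun S ↦ ∀ B, (M ／ {v} ＼ (C \ {v})).IsBase B → ℓ - 1 ≤ (S ∩ B).ncard)
    (fun _ ↦ mem_SF_iff) (fun _ ↦ mem_SF_iff) fun _ ↦ hC.forall_le_ncard_inter_isBase_iff hv

end ColonIdeals

theorem stmt14_general {α : Type*} [Fintype α] (K : Type*) [Field K]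
    (M : Matroid α)
    (C : Set α) (hC : _root_.IsCocircuit M C) (v : α) (hv : v ∈ C)
    (ℓ : ℕ) :
    Submodule.colon (SF K M ℓ) (Ideal.span {xS K C}) =
      SF K (mdel (mcon M {v}) (C \ {v})) (ℓ - 1) ∧
    Submodule.colon (coverIdeal K (mcon M {v})) (Ideal.span {xS K C}) =
      coverIdeal K (mdel (mcon M {v}) (C \ {v})) := by
  have hC' : M.IsCocircuit C := hC.isCocircuit
  have hCE : C ∩ (M ／ {v}).E = C \ {v} := by
    rw [contract_ground, ← Set.inter_sdiff_assoc, Set.inter_eq_left.2 hC'.subset_ground]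
  refine ⟨SF_colon_xS_of_isCocircuit hC' hv ℓ, ?_⟩
  change (coverIdeal K (M ／ {v})).colon _ = coverIdeal K (M ／ {v} ＼ (C \ {v}))
  rw [← hCE, delete_inter_ground_eq]
  exact coverIdeal_colon_xS_of_coindep (hCE ▸ hC'.coindep_contract_sdiff hv)

/-- let `C` be a cocircuit of `M`, `v ∈ C`, and `ℓ ≥ 2`. Then
`SF_ℓ(J(M)) : x_C = SF_{ℓ−1}(J(M ⧸ {v}) : x_C) = SF_{ℓ−1}(J((M ⧸ {v}) ⧹ (C \ {v})))`,
where the middle and right terms agree because `J(M ⧸ {v}) : x_C = J((M ⧸ {v}) ⧹ (C \ {v}))`. -/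
theorem stmt14 {α : Type*} [Fintype α] (K : Type*) [Field K]
    (M : Matroid α) (hE : M.E = Set.univ)
    (C : Set α) (hC : _root_.IsCocircuit M C) (v : α) (hv : v ∈ C)
    (ℓ : ℕ) (hℓ : 2 ≤ ℓ) :
    Submodule.colon (SF K M ℓ) (Ideal.span {xS K C}) =
      SF K (mdel (mcon M {v}) (C \ {v})) (ℓ - 1) ∧
    Submodule.colon (coverIdeal K (mcon M {v})) (Ideal.span {xS K C}) =
      coverIdeal K (mdel (mcon M {v}) (C \ {v})) :=
  stmt14_general K M C hC v hv ℓ
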